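/- Let (Ω, 𝓕, P) be a probability space and let X, Y : Ω → ℝ be random variables that are almost surely positive, such that X, Y, 1/Y, 1/(X+Y), log₂(Y), log₂(X+Y), and log₂(1 + X/Y) are all integrable. Then |E[log₂(1 + X/Y)] − log₂(1 + E[X]/E[Y])| ≤ log₂( E[X+Y] · E[1/(X+Y)] · E[Y] · E[1/Y] ). -/

import Mathlib

/-!
With `S = X + Y`, both `log₂ (1 + X / Y) = log₂ S - log₂ Y` and
`log₂ (1 + E X / E Y) = log₂ (E S) - log₂ (E Y)`, so the error is the difference of the Jensen
gaps `log₂ (E Z) - E (log₂ Z)` for `Z = S` and `Z = Y`. Each gap is nonnegative by Jensen for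
the concave `log₂`, and at most `log₂ (E Z · E (1 / Z))` by Jensen applied to `1 / Z`, since
`log₂ (1 / Z) = - log₂ Z`. A difference of two numbers in `[0, a]` and `[0, b]` is at most
`a + b`.
-/

open MeasureTheory ProbabilityTheory Real

section

variable {α : Type*} [MeasurableSpace α] {μ : Measure α} {f : α → ℝ}

theorem integral_pos_of_ae_pos [NeZero μ] (hf : Integrable f μ) (hpos : ∀ᵐ x ∂μ, 0 < f x) :
    0 < ∫ x, f x ∂μ := by
  rw [integral_pos_iff_support_of_nonneg_ae (hpos.mono fun _ h => h.le) hf]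
  have hfull : Function.support f =ᵐ[μ] Set.univ :=
    ae_eq_univ.2 (ae_iff.1 (hpos.mono fun _ h => h.ne'))
  simp [measure_congr hfull, NeZero.ne]

variable [IsProbabilityMeasure μ]

/-- The tangent line `log z ≤ log c + (z / c - 1)` at `c = ∫ f` integrates to Jensen's
inequality. -/
theorem integral_log_le_log_integral (hf : Integrable f μ) (hpos : ∀ᵐ x ∂μ, 0 < f x)
    (hlog : Integrable (fun x => log (f x)) μ) :
    ∫ x, log (f x) ∂μ ≤ log (∫ x, f x ∂μ) := by
  set c := ∫ x, f x ∂μ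
  have hc : 0 < c := integral_pos_of_ae_pos hf hpos
  have htangent : ∀ᵐ x ∂μ, log (f x) ≤ log c + (f x / c - 1) := by
    filter_upwards [hpos] with x hx
    have h := log_le_sub_one_of_pos (div_pos hx hc)
    rw [log_div hx.ne' hc.ne'] at h
    linarith
  have hint : Integrable (fun x => f x / c - 1) μ := (hf.div_const c).sub (integrable_const 1)
  calc ∫ x, log (f x) ∂μ ≤ ∫ x, (log c + (f x / c - 1)) ∂μ :=
        integral_mono_ae hlog ((integrable_const _).add hint) htangent
    _ = log c := by
        rw [integral_add (integrable_const _) hint, integral_sub (hf.div_const c)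
          (integrable_const 1), integral_div]
        simp [c, hc.ne']

variable {b : ℝ}

theorem integral_logb_le_logb_integral (hb : 1 < b) (hf : Integrable f μ)
    (hpos : ∀ᵐ x ∂μ, 0 < f x) (hlog : Integrable (fun x => logb b (f x)) μ) :
    ∫ x, logb b (f x) ∂μ ≤ logb b (∫ x, f x ∂μ) := by
  have hlog' : Integrable (fun x => log (f x)) μ := by
    simpa [logb, div_mul_cancel₀ _ (log_pos hb).ne'] using hlog.mul_const (log b)
  simp only [logb, integral_div]
  exact div_le_div_of_nonneg_right (integral_log_le_log_integral hf hpos hlog') (log_pos hb).le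

theorem neg_logb_integral_inv_le_integral_logb (hb : 1 < b)
    (hinv : Integrable (fun x => 1 / f x) μ) (hpos : ∀ᵐ x ∂μ, 0 < f x)
    (hlog : Integrable (fun x => logb b (f x)) μ) :
    -logb b (∫ x, 1 / f x ∂μ) ≤ ∫ x, logb b (f x) ∂μ := by
  have hlog_inv : (fun x => logb b (1 / f x)) = fun x => -logb b (f x) := by
    ext x; rw [one_div, logb_inv]
  have h := integral_logb_le_logb_integral hb hinv (hpos.mono fun _ h => one_div_pos.2 h)
    (hlog_inv ▸ hlog.neg)
  rw [hlog_inv, integral_neg] at h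
  linarith

theorem logb_integral_sub_integral_logb_mem_Icc (hb : 1 < b) (hf : Integrable f μ)
    (hinv : Integrable (fun x => 1 / f x) μ) (hpos : ∀ᵐ x ∂μ, 0 < f x)
    (hlog : Integrable (fun x => logb b (f x)) μ) :
    logb b (∫ x, f x ∂μ) - ∫ x, logb b (f x) ∂μ ∈
      Set.Icc 0 (logb b ((∫ x, f x ∂μ) * ∫ x, 1 / f x ∂μ)) := by
  have hf_pos := integral_pos_of_ae_pos hf hpos
  have hinv_pos := integral_pos_of_ae_pos hinv (hpos.mono fun _ h => one_div_pos.2 h)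
  rw [logb_mul hf_pos.ne' hinv_pos.ne']
  constructor
  · linarith [integral_logb_le_logb_integral hb hf hpos hlog]
  · linarith [neg_logb_integral_inv_le_integral_logb hb hinv hpos hlog]

end

theorem Real.logb_one_add_div {b x y : ℝ} (hy : y ≠ 0) (hxy : x + y ≠ 0) :
    logb b (1 + x / y) = logb b (x + y) - logb b y := by
  rw [one_add_div hy, add_comm y, logb_div hxy hy]

theorem rate_approximation_error_bound_general
    {Ω : Type*} [MeasureSpace Ω] [IsProbabilityMeasure (ℙ : Measure Ω)]
    (X Y : Ω → ℝ)
    (hXpos : ∀ᵐ ω ∂ℙ, 0 < X ω) (hYpos : ∀ᵐ ω ∂ℙ, 0 < Y ω)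
    (hX : Integrable X) (hY : Integrable Y)
    (hinvY : Integrable (fun ω => 1 / Y ω))
    (hinvXY : Integrable (fun ω => 1 / (X ω + Y ω)))
    (hlogY : Integrable (fun ω => Real.logb 2 (Y ω)))
    (hlogXY : Integrable (fun ω => Real.logb 2 (X ω + Y ω))) :
    |(∫ ω, Real.logb 2 (1 + X ω / Y ω)) -
        Real.logb 2 (1 + (∫ ω, X ω) / (∫ ω, Y ω))| ≤
      Real.logb 2 ((∫ ω, (X ω + Y ω)) * (∫ ω, 1 / (X ω + Y ω)) *
        (∫ ω, Y ω) * (∫ ω, 1 / Y ω)) := by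
  have hXYpos : ∀ᵐ ω ∂ℙ, 0 < X ω + Y ω := by
    filter_upwards [hXpos, hYpos] with ω hx hy
    positivity
  have hX_pos := integral_pos_of_ae_pos hX hXpos
  have hY_pos := integral_pos_of_ae_pos hY hYpos
  have hinvXY_pos := integral_pos_of_ae_pos hinvXY (hXYpos.mono fun _ h => one_div_pos.2 h)
  have hinvY_pos := integral_pos_of_ae_pos hinvY (hYpos.mono fun _ h => one_div_pos.2 h)
  have hlhs :
      ∫ ω, logb 2 (1 + X ω / Y ω) = (∫ ω, logb 2 (X ω + Y ω)) - ∫ ω, logb 2 (Y ω) := by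
    rw [← integral_sub hlogXY hlogY]
    refine integral_congr_ae ?_
    filter_upwards [hYpos, hXYpos] with ω hy hxy
    exact logb_one_add_div hy.ne' hxy.ne'
  have hmean : logb 2 (1 + (∫ ω, X ω) / ∫ ω, Y ω) =
      logb 2 (∫ ω, (X ω + Y ω)) - logb 2 (∫ ω, Y ω) := by
    rw [integral_add hX hY]
    exact logb_one_add_div hY_pos.ne' (add_pos hX_pos hY_pos).ne'
  have hrhs :
      logb 2 ((∫ ω, (X ω + Y ω)) * (∫ ω, 1 / (X ω + Y ω)) * (∫ ω, Y ω) * ∫ ω, 1 / Y ω) =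
      logb 2 ((∫ ω, (X ω + Y ω)) * ∫ ω, 1 / (X ω + Y ω)) +
        logb 2 ((∫ ω, Y ω) * ∫ ω, 1 / Y ω) := by
    rw [integral_add hX hY, mul_assoc _ (∫ ω, Y ω), logb_mul (by positivity) (by positivity)]
  obtain ⟨hXY_lo, hXY_hi⟩ :=
    logb_integral_sub_integral_logb_mem_Icc (f := fun ω => X ω + Y ω) one_lt_two (hX.add hY)
      hinvXY hXYpos hlogXY
  obtain ⟨hY_lo, hY_hi⟩ :=
    logb_integral_sub_integral_logb_mem_Icc one_lt_two hY hinvY hYpos hlogY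
  rw [hlhs, hmean, hrhs, abs_le]
  constructor <;> linarith

/-- Jensen-type bound on the error of approximating `E[log₂(1 + X/Y)]` by
`log₂(1 + E[X]/E[Y])` for almost surely positive random variables `X`, `Y`. -/
theorem rate_approximation_error_bound
    {Ω : Type*} [MeasureSpace Ω] [IsProbabilityMeasure (ℙ : Measure Ω)]
    (X Y : Ω → ℝ)
    (hXpos : ∀ᵐ ω ∂ℙ, 0 < X ω) (hYpos : ∀ᵐ ω ∂ℙ, 0 < Y ω)
    (hX : Integrable X) (hY : Integrable Y)
    (hinvY : Integrable (fun ω => 1 / Y ω))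
    (hinvXY : Integrable (fun ω => 1 / (X ω + Y ω)))
    (hlogY : Integrable (fun ω => Real.logb 2 (Y ω)))
    (hlogXY : Integrable (fun ω => Real.logb 2 (X ω + Y ω)))
    (hlogR : Integrable (fun ω => Real.logb 2 (1 + X ω / Y ω))) :
    |(∫ ω, Real.logb 2 (1 + X ω / Y ω)) -
        Real.logb 2 (1 + (∫ ω, X ω) / (∫ ω, Y ω))| ≤
      Real.logb 2 ((∫ ω, (X ω + Y ω)) * (∫ ω, 1 / (X ω + Y ω)) *
        (∫ ω, Y ω) * (∫ ω, 1 / Y ω)) :=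
  rate_approximation_error_bound_general X Y hXpos hYpos hX hY hinvY hinvXY hlogY hlogXY
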